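/- Let A, B be real numbers with −1 ≤ B < 0 < A ≤ 1 and set R₁ = min{ 1, (√2·e − √(1+e²)) / (A·√(1+e²) − √2·e·B) }. If p is analytic on 𝔻 and p ≺ (1+Az)/(1+Bz), then for every z ∈ 𝔻 with |z| < R₁ one has p(z) ∈ 𝔅(𝔻), i.e. there exists u ∈ 𝔻 with p(z) = 𝔅(u). (This is the 𝒮*_𝔅-radius statement for the Janowski class 𝒮*[A,B], the case p(z) = zf'(z)/f(z).) -/

import Mathlib

open Complex Metric

/-- The bean function 𝔅(z) = (1 + tanh z)^(1/2), principal branch of the complex power. -/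
noncomputable def Bean (z : ℂ) : ℂ := (1 + Complex.tanh z) ^ ((1:ℂ)/2)

/-- The open unit disk in ℂ. -/
def unitDisk : Set ℂ := Metric.ball (0:ℂ) 1

/-- `Subord p g` : p is subordinate to g on the unit disk. -/
def Subord (p g : ℂ → ℂ) : Prop :=
  ∃ ω : ℂ → ℂ, AnalyticOnNhd ℂ ω unitDisk ∧ ω 0 = 0 ∧
    (∀ z ∈ unitDisk, ‖ω z‖ < 1) ∧ ∀ z ∈ unitDisk, p z = g (ω z)

/-!
Write `b = 𝔅(1) = √(1 + tanh 1) = √2 e / √(1 + e²)`. The disk `|w - 1| < b - 1` lies in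
`𝔅(𝔻)`: for such `w` the point `s = w² - 1` has `|s| < b² - 1 = tanh 1`, so `u = artanh s`
satisfies `|u| ≤ artanh |s| < 1` (compare Taylor coefficients), `tanh u = s`, and
`𝔅(u) = √(w²) = w` because `Re w > 0`. By the Schwarz lemma `p(z) = g(ζ)` for the Janowski
function `g` and some `|ζ| ≤ |z|`, and `|g(ζ) - 1| ≤ (A - B)|ζ| / (1 + B|ζ|)`, which is below
`b - 1` exactly when `|ζ| < (b - 1) / (A - bB)`.
-/

theorem Real.tanh_pos {x : ℝ} (hx : 0 < x) : 0 < tanh x := by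
  rw [tanh_eq_sinh_div_cosh]
  exact div_pos (sinh_pos_iff.mpr hx) (cosh_pos x)

theorem Real.one_add_tanh_pos (x : ℝ) : 0 < 1 + tanh x := by
  linarith [neg_one_lt_tanh x]

theorem Real.hasSum_artanh {x : ℝ} (hx : |x| < 1) :
    HasSum (fun n : ℕ => x ^ (2 * n + 1) / (2 * n + 1)) (artanh x) := by
  obtain ⟨hx₁, hx₂⟩ := abs_lt.mp hx
  rw [artanh_eq_half_log ⟨hx₁.le, hx₂.le⟩, log_div (by linarith) (by linarith),
    one_div_mul_eq_div]
  exact ((hasSum_log_sub_log_of_abs_lt_one hx).div_const 2).congr_fun fun n => by ring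

namespace Complex

theorem norm_arctan_le {w : ℂ} (hw : ‖w‖ < 1) : ‖arctan w‖ ≤ Real.artanh ‖w‖ := by
  rw [← (hasSum_arctan hw).tsum_eq]
  refine tsum_of_norm_bounded (Real.hasSum_artanh (by rwa [abs_norm])) fun n => ?_
  simp only [norm_div, norm_mul, norm_pow, norm_neg, norm_one, one_pow, one_mul, norm_natCast]
  push_cast
  rfl

-- The principal branch `(log (1 + s) - log (1 - s)) / 2`, written through `arctan`
-- because `tanh (z * I) = tan z * I`.
noncomputable def artanh (s : ℂ) : ℂ := I * arctan (-(I * s))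

theorem tanh_artanh {s : ℂ} (h₁ : s ≠ 1) (h₂ : s ≠ -1) : tanh (artanh s) = s := by
  have h : tan (arctan (-(I * s))) = -(I * s) :=
    tan_arctan (by contrapose! h₂; linear_combination I * h₂ + (s + 1) * I_sq)
      (by contrapose! h₁; linear_combination I * h₁ + (s - 1) * I_sq)
  rw [artanh, mul_comm, tanh_mul_I, h]
  linear_combination (-s) * I_sq

theorem norm_artanh_le {s : ℂ} (hs : ‖s‖ < 1) : ‖artanh s‖ ≤ Real.artanh ‖s‖ := by
  have h : ‖-(I * s)‖ = ‖s‖ := by simp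
  simpa [artanh, h] using norm_arctan_le (w := -(I * s)) (by rwa [h])

theorem norm_artanh_lt_one {s : ℂ} (hs : ‖s‖ < Real.tanh 1) : ‖artanh s‖ < 1 := calc
  ‖artanh s‖ ≤ Real.artanh ‖s‖ := norm_artanh_le (hs.trans (Real.tanh_lt_one 1))
  _ < Real.artanh (Real.tanh 1) :=
    Real.artanh_lt_artanh (by linarith [norm_nonneg s]) (Real.tanh_lt_one 1) hs
  _ = 1 := Real.artanh_tanh 1

theorem norm_sq_sub_one_lt {w : ℂ} {r : ℝ} (hw : ‖w - 1‖ < r) :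
    ‖w ^ 2 - 1‖ < r * (r + 2) := calc
  ‖w ^ 2 - 1‖ = ‖w - 1‖ * ‖(w - 1) + 2‖ := by rw [← norm_mul]; ring_nf
  _ ≤ ‖w - 1‖ * (‖w - 1‖ + 2) := by
    gcongr
    exact (norm_add_le _ _).trans_eq (by norm_num)
  _ < r * (r + 2) := by gcongr

theorem re_pos_of_norm_sub_one_lt_one {w : ℂ} (hw : ‖w - 1‖ < 1) : 0 < w.re := by
  have h := (abs_lt.mp ((abs_re_le_norm (w - 1)).trans_lt hw)).1
  simp only [sub_re, one_re] at h
  linarith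

end Complex

theorem one_lt_sqrt_one_add_tanh_one : 1 < √(1 + Real.tanh 1) := by
  rw [Real.lt_sqrt zero_le_one]
  linarith [Real.tanh_pos one_pos]

theorem sqrt_one_add_tanh_one_lt_two : √(1 + Real.tanh 1) < 2 := by
  rw [Real.sqrt_lt' two_pos]
  linarith [Real.tanh_lt_one 1]

theorem sqrt_one_add_tanh_one_eq :
    √(1 + Real.tanh 1) = √2 * Real.exp 1 / √(1 + Real.exp 1 ^ 2) := by
  have h : 1 + Real.tanh 1 = 2 * Real.exp 1 ^ 2 / (1 + Real.exp 1 ^ 2) := by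
    rw [Real.tanh_eq, Real.exp_neg]
    field_simp
    ring
  rw [h, Real.sqrt_div' _ (by positivity), Real.sqrt_mul zero_le_two,
    Real.sqrt_sq (by positivity)]

theorem ball_one_subset_image_bean :
    ball (1 : ℂ) (√(1 + Real.tanh 1) - 1) ⊆ Bean '' unitDisk := by
  intro w hw
  rw [mem_ball_iff_norm] at hw
  have hs : ‖w ^ 2 - 1‖ < Real.tanh 1 := by
    have := Complex.norm_sq_sub_one_lt hw
    nlinarith [Real.sq_sqrt (Real.one_add_tanh_pos 1).le]
  have hs₁ : ‖w ^ 2 - 1‖ < 1 := hs.trans (Real.tanh_lt_one 1)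
  have hre : 0 < w.re :=
    Complex.re_pos_of_norm_sub_one_lt_one (by linarith [sqrt_one_add_tanh_one_lt_two])
  refine ⟨Complex.artanh (w ^ 2 - 1), mem_ball_zero_iff.mpr (Complex.norm_artanh_lt_one hs), ?_⟩
  rw [Bean, Complex.tanh_artanh, add_sub_cancel, one_div, Complex.sq_cpow_two_inv hre]
  · rintro h; simp [h] at hs₁
  · rintro h; simp [h] at hs₁

theorem Subord.mem_image_closedBall {p g : ℂ → ℂ} (h : Subord p g) {z : ℂ}
    (hz : z ∈ unitDisk) : p z ∈ g '' closedBall 0 ‖z‖ := by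
  obtain ⟨ω, hω, hω₀, hω₁, hpω⟩ := h
  refine ⟨ω z, mem_closedBall_zero_iff.mpr ?_, (hpω z hz).symm⟩
  exact Complex.norm_le_norm_of_mapsTo_ball
    (fun x hx => (hω x hx).differentiableAt.differentiableWithinAt)
    (fun x hx => mem_closedBall_zero_iff.mpr (hω₁ x hx).le) hω₀ (mem_ball_zero_iff.mp hz)

theorem norm_div_one_add_mul_sub_one_le (A B : ℝ) {ζ : ℂ} (h : |B| * ‖ζ‖ < 1) :
    ‖(1 + A * ζ) / (1 + B * ζ) - 1‖ ≤ |A - B| * ‖ζ‖ / (1 - |B| * ‖ζ‖) := by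
  have hden : 1 - |B| * ‖ζ‖ ≤ ‖1 + (B : ℂ) * ζ‖ := by
    simpa [norm_mul] using norm_sub_norm_le (1 : ℂ) (-(B * ζ))
  have hne : (1 : ℂ) + B * ζ ≠ 0 := by
    rintro h0; rw [h0, norm_zero] at hden; linarith
  have hnum : 1 + (A : ℂ) * ζ - (1 + B * ζ) = ((A - B : ℝ) : ℂ) * ζ := by push_cast; ring
  rw [div_sub_one hne, hnum, norm_div, norm_mul, Complex.norm_real, Real.norm_eq_abs]
  exact div_le_div_of_nonneg_left (by positivity) (by linarith) hden

theorem janowski_radius_eq (A B : ℝ) :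
    (√2 * Real.exp 1 - √(1 + Real.exp 1 ^ 2)) /
        (A * √(1 + Real.exp 1 ^ 2) - √2 * Real.exp 1 * B)
      = (√(1 + Real.tanh 1) - 1) / (A - √(1 + Real.tanh 1) * B) := by
  rw [sqrt_one_add_tanh_one_eq]
  field_simp

theorem beanRadiusJanowski_general (A B : ℝ) (hB1 : -1 ≤ B) (hB0 : B < 0)
    (hA0 : 0 < A) (R1 : ℝ)
    (hR1 : R1 = min 1 ((Real.sqrt 2 * Real.exp 1 - Real.sqrt (1 + Real.exp 1 ^ 2)) /
        (A * Real.sqrt (1 + Real.exp 1 ^ 2) - Real.sqrt 2 * Real.exp 1 * B)))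
    (p : ℂ → ℂ)
    (hsub : Subord p (fun z => (1 + (A:ℂ)*z) / (1 + (B:ℂ)*z))) :
    ∀ z ∈ unitDisk, ‖z‖ < R1 → ∃ u ∈ unitDisk, p z = Bean u := by
  intro z hz hzR
  set b := √(1 + Real.tanh 1)
  have hb : 1 < b := one_lt_sqrt_one_add_tanh_one
  obtain ⟨ζ, hζ, hpz⟩ := hsub.mem_image_closedBall hz
  rw [mem_closedBall_zero_iff] at hζ
  have hζ₁ : ‖ζ‖ < 1 := hζ.trans_lt (mem_ball_zero_iff.mp hz)
  have hζR : ‖ζ‖ * (A - b * B) < b - 1 := by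
    have h := hζ.trans_lt (hzR.trans_le (hR1 ▸ min_le_right _ _))
    rwa [janowski_radius_eq, lt_div_iff₀ (by nlinarith)] at h
  have hBζ : |B| * ‖ζ‖ < 1 := by
    rw [abs_of_neg hB0]
    nlinarith [norm_nonneg ζ]
  have hpz₁ : ‖p z - 1‖ < b - 1 := calc
    ‖p z - 1‖ ≤ |A - B| * ‖ζ‖ / (1 - |B| * ‖ζ‖) :=
      hpz ▸ norm_div_one_add_mul_sub_one_le A B hBζ
    _ < b - 1 := by
      rw [abs_of_neg hB0] at hBζ ⊢
      rw [abs_of_pos (by linarith), div_lt_iff₀ (by linarith)]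
      nlinarith
  obtain ⟨u, hu, hBean⟩ := ball_one_subset_image_bean (mem_ball_iff_norm.mpr hpz₁)
  exact ⟨u, hu, hBean.symm⟩

/-- 𝒮*_𝔅-radius for the Janowski class 𝒮*[A,B], −1 ≤ B < 0 < A ≤ 1. -/
theorem beanRadiusJanowski (A B : ℝ) (hB1 : -1 ≤ B) (hB0 : B < 0)
    (hA0 : 0 < A) (hA1 : A ≤ 1) (R1 : ℝ)
    (hR1 : R1 = min 1 ((Real.sqrt 2 * Real.exp 1 - Real.sqrt (1 + Real.exp 1 ^ 2)) /
        (A * Real.sqrt (1 + Real.exp 1 ^ 2) - Real.sqrt 2 * Real.exp 1 * B)))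
    (p : ℂ → ℂ) (hp : AnalyticOnNhd ℂ p unitDisk)
    (hsub : Subord p (fun z => (1 + (A:ℂ)*z) / (1 + (B:ℂ)*z))) :
    ∀ z ∈ unitDisk, ‖z‖ < R1 → ∃ u ∈ unitDisk, p z = Bean u :=
  beanRadiusJanowski_general A B hB1 hB0 hA0 R1 hR1 p hsub
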